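/- Delayed yanking: the delayed trace of the swap map is a delay gate, not the identity. Concretely, for a set X and i ∈ X, the function r : X^ℕ → X^ℕ obtained by feeding back the first output of the swap σ : X × X → X × X through a delay initialized at i satisfies (r x)_0 = i and (r x)_{n+1} = x_n. In particular r is causal, and r is not the identity when X has at least two elements. -/
import Mathlib


def Causal {A B : Type*} (f : (ℕ → A) → (ℕ → B)) : Prop :=
  ∀ x y : ℕ → A, ∀ n : ℕ, (∀ i ≤ n, x i = y i) → ∀ i ≤ n, f x i = f y i

def mealyStates {A B T : Type*} (t0 : T) (ρ : T × A → T × B) (x : ℕ → A) : ℕ → T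
  | 0 => t0
  | n + 1 => (ρ (mealyStates t0 ρ x n, x n)).1

def mealyInduced {A B T : Type*} (t0 : T) (ρ : T × A → T × B) (x : ℕ → A) (n : ℕ) : B :=
  (ρ (mealyStates t0 ρ x n, x n)).2

theorem delayed_yanking {X : Type*} (i : X) :
    (∀ x : ℕ → X, mealyInduced i (fun p : X × X => (p.2, p.1)) x 0 = i) ∧
    (∀ (x : ℕ → X) (n : ℕ),
      mealyInduced i (fun p : X × X => (p.2, p.1)) x (n + 1) = x n) ∧
    Causal (mealyInduced i (fun p : X × X => (p.2, p.1))) ∧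
    (∀ a b : X, a ≠ b →
      mealyInduced i (fun p : X × X => (p.2, p.1)) ≠ id) := by
  have h0 : ∀ x : ℕ → X, mealyInduced i (fun p : X × X => (p.2, p.1)) x 0 = i := by
    intro x; rfl
  have hs : ∀ (x : ℕ → X) (n : ℕ),
      mealyInduced i (fun p : X × X => (p.2, p.1)) x (n + 1) = x n := by
    intro x n; rfl
  refine ⟨h0, hs, ?_, ?_⟩
  · intro x y n h j hj
    cases j with
    | zero => rw [h0, h0]
    | succ k => rw [hs, hs, h k (le_trans (Nat.le_succ k) hj)]
  · intro a b hab heq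
    by_cases hia : i = a
    · have := h0 (fun _ => b)
      rw [heq] at this
      exact hab (hia.symm.trans this.symm)
    · have := h0 (fun _ => a)
      rw [heq] at this
      exact hia this.symm
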